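/- Let z > 0 and let f_z be the solution of the Stein equation, f_z(x) = √(2π) e^{x²/2} Φ(x) (1 - Φ(z)) for x ≤ z and f_z(x) = √(2π) e^{x²/2} (1 - Φ(x)) Φ(z) for x > z. Then for every x with |x| ≤ z/2 we have 0 < f_z(x) ≤ (√(2π)/2) e^{-z²/4}. -/

import Mathlib

/-!
For `|x| ≤ z / 2` we are in the branch `x ≤ z`, where
`f_z(x) = √(2π) e^{x²/2} Φ(x) (1 - Φ(z))`. Bound `Φ(x) ≤ 1` and use the Gaussian tail estimate
`1 - Φ(z) ≤ e^{-z²/2} / 2` for `z ≥ 0`; since `x² ≤ z²/4`, the product is at most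
`(√(2π)/2) e^{z²/8 - z²/2} ≤ (√(2π)/2) e^{-z²/4}`.
-/

open MeasureTheory Real

noncomputable def stdPhi (x : ℝ) : ℝ :=
  (Real.sqrt (2 * Real.pi))⁻¹ * ∫ u in Set.Iic x, Real.exp (-u ^ 2 / 2)

noncomputable def steinF (z x : ℝ) : ℝ :=
  if x ≤ z then Real.sqrt (2 * Real.pi) * Real.exp (x ^ 2 / 2) * stdPhi x * (1 - stdPhi z)
  else Real.sqrt (2 * Real.pi) * Real.exp (x ^ 2 / 2) * (1 - stdPhi x) * stdPhi z

open Set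

lemma integrable_exp_neg_sq_div_two : Integrable (fun u : ℝ => exp (-u ^ 2 / 2)) := by
  convert integrable_exp_neg_mul_sq (b := 1 / 2) (by norm_num) using 2 with u
  ring_nf

lemma integral_exp_neg_sq_div_two : ∫ u : ℝ, exp (-u ^ 2 / 2) = √(2 * π) := by
  convert integral_gaussian (1 / 2) using 2 <;> ring_nf

lemma integral_Ioi_zero_exp_neg_sq_div_two :
    ∫ u in Ioi (0 : ℝ), exp (-u ^ 2 / 2) = √(2 * π) / 2 := by
  convert integral_gaussian_Ioi (1 / 2) using 3 <;> ring_nf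

lemma setIntegral_exp_neg_sq_div_two_pos {s : Set ℝ} (hs : volume s ≠ 0) :
    0 < ∫ u in s, exp (-u ^ 2 / 2) :=
  have : NeZero (volume s) := ⟨hs⟩
  integral_exp_pos integrable_exp_neg_sq_div_two.integrableOn

/-- The shift `u = t + z` and `(t + z)² ≥ t² + z²` for `t, z ≥ 0` reduce the tail to a half-line
Gaussian integral. -/
lemma integral_Ioi_exp_neg_sq_div_two_le {z : ℝ} (hz : 0 ≤ z) :
    ∫ u in Ioi z, exp (-u ^ 2 / 2) ≤ exp (-z ^ 2 / 2) * (√(2 * π) / 2) := by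
  have hshift : ∫ t in Ioi (0 : ℝ), exp (-(t + z) ^ 2 / 2) = ∫ u in Ioi z, exp (-u ^ 2 / 2) := by
    simpa using (measurePreserving_add_right volume z).setIntegral_preimage_emb
      (measurableEmbedding_addRight z) (fun u => exp (-u ^ 2 / 2)) (Ioi z)
  rw [← hshift, ← integral_Ioi_zero_exp_neg_sq_div_two, ← integral_const_mul]
  refine setIntegral_mono_on (integrable_exp_neg_sq_div_two.comp_add_right z).integrableOn
    (integrable_exp_neg_sq_div_two.const_mul _).integrableOn measurableSet_Ioi fun t ht => ?_
  rw [← exp_add, exp_le_exp]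
  nlinarith [mem_Ioi.mp ht]

lemma stdPhi_pos (x : ℝ) : 0 < stdPhi x :=
  mul_pos (by positivity) (setIntegral_exp_neg_sq_div_two_pos (by simp))

lemma stdPhi_le_one (x : ℝ) : stdPhi x ≤ 1 := by
  rw [stdPhi, inv_mul_le_iff₀ (by positivity), mul_one, ← integral_exp_neg_sq_div_two]
  exact setIntegral_le_integral integrable_exp_neg_sq_div_two
    (Filter.Eventually.of_forall fun u => (exp_pos _).le)

lemma one_sub_stdPhi_eq (z : ℝ) :
    1 - stdPhi z = (√(2 * π))⁻¹ * ∫ u in Ioi z, exp (-u ^ 2 / 2) := by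
  have hsplit := intervalIntegral.integral_Iic_add_Ioi (b := z)
    integrable_exp_neg_sq_div_two.integrableOn integrable_exp_neg_sq_div_two.integrableOn
  rw [integral_exp_neg_sq_div_two] at hsplit
  rw [stdPhi, ← inv_mul_cancel₀ (by positivity : √(2 * π) ≠ 0), ← hsplit]
  ring

lemma one_sub_stdPhi_pos (z : ℝ) : 0 < 1 - stdPhi z := by
  rw [one_sub_stdPhi_eq]
  exact mul_pos (by positivity) (setIntegral_exp_neg_sq_div_two_pos (by simp))

lemma one_sub_stdPhi_le {z : ℝ} (hz : 0 ≤ z) : 1 - stdPhi z ≤ exp (-z ^ 2 / 2) / 2 := by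
  rw [one_sub_stdPhi_eq, inv_mul_le_iff₀ (by positivity)]
  calc ∫ u in Ioi z, exp (-u ^ 2 / 2) ≤ exp (-z ^ 2 / 2) * (√(2 * π) / 2) :=
        integral_Ioi_exp_neg_sq_div_two_le hz
    _ = √(2 * π) * (exp (-z ^ 2 / 2) / 2) := by ring

lemma steinF_of_le {z x : ℝ} (h : x ≤ z) :
    steinF z x = √(2 * π) * exp (x ^ 2 / 2) * stdPhi x * (1 - stdPhi z) :=
  if_pos h

theorem steinF_bound_center_general (z x : ℝ) (hx : |x| ≤ z / 2) :
    0 < steinF z x ∧ steinF z x ≤ (Real.sqrt (2 * Real.pi) / 2) * Real.exp (-z ^ 2 / 4) := by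
  have hz : 0 ≤ z := by linarith [abs_nonneg x]
  have hx2 : x ^ 2 ≤ z ^ 2 / 4 :=
    calc x ^ 2 = |x| ^ 2 := (sq_abs x).symm
      _ ≤ (z / 2) ^ 2 := by gcongr
      _ = z ^ 2 / 4 := by ring
  rw [steinF_of_le (by linarith [le_abs_self x])]
  constructor
  · exact mul_pos (mul_pos (by positivity) (stdPhi_pos x)) (one_sub_stdPhi_pos z)
  calc √(2 * π) * exp (x ^ 2 / 2) * stdPhi x * (1 - stdPhi z)
      ≤ √(2 * π) * exp (x ^ 2 / 2) * 1 * (exp (-z ^ 2 / 2) / 2) :=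
        mul_le_mul (mul_le_mul_of_nonneg_left (stdPhi_le_one x) (by positivity))
          (one_sub_stdPhi_le hz) (one_sub_stdPhi_pos z).le (by positivity)
    _ = √(2 * π) / 2 * exp (x ^ 2 / 2 + -z ^ 2 / 2) := by
        rw [exp_add]
        ring
    _ ≤ √(2 * π) / 2 * exp (-z ^ 2 / 4) := by
        gcongr
        linarith [sq_nonneg z]

theorem steinF_bound_center (z x : ℝ) (hz : 0 < z) (hx : |x| ≤ z / 2) :
    0 < steinF z x ∧ steinF z x ≤ (Real.sqrt (2 * Real.pi) / 2) * Real.exp (-z ^ 2 / 4) :=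
  steinF_bound_center_general z x hx
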